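/- Let (P_μ)_{μ∈𝒫(E)} be a nonlinear Markov transition kernel family on a measurable space (E,ℰ) satisfying the measure-Lipschitz condition with constant λ ≥ 0. For μ, ν ∈ 𝒫(E) let η(dx) = (dμ/dν ∧ 1) ν(dx), where dμ/dν is the Radon–Nikodym derivative of the absolutely continuous part of μ with respect to ν. Then d_TV(P_μ η, P_ν η) ≤ λ d_TV(μ,ν)(1 − d_TV(μ,ν)/2). -/

import Mathlib

/-!
Since `dμ/dν ∧ 1` is dominated both by `dμ/dν` and by `1`, the measure `η` lies below both `μ`
and `ν`. Splitting `η(E) = η(A) + η(Aᶜ) ≤ μ(A) + ν(Aᶜ)` over any measurable `A` then gives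
`η(E) ≤ 1 − d_TV(μ,ν)/2`. On the other hand, integrating the pointwise Lipschitz bound against
`η` gives `d_TV(P_μ η, P_ν η) ≤ λ d_TV(μ,ν) η(E)`.
-/

open MeasureTheory ProbabilityTheory

/-- Total variation distance between finite measures (for measures of equal total mass this
is the total variation norm of the difference):
`d_TV(ρ₁,ρ₂) = 2 ⨆_{A measurable} |ρ₁(A) − ρ₂(A)|`. -/
noncomputable def dTV {E : Type*} [MeasurableSpace E] (μ ν : Measure E) : ℝ :=
  2 * ⨆ A : {A : Set E // MeasurableSet A}, |(μ A.1).toReal - (ν A.1).toReal|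

section TotalVariation

variable {E : Type*} [MeasurableSpace E]

lemma dTV_nonneg (μ ν : Measure E) : 0 ≤ dTV μ ν :=
  mul_nonneg zero_le_two (Real.iSup_nonneg fun _ => abs_nonneg _)

lemma abs_measureReal_sub_le_half_dTV (μ ν : Measure E) [IsFiniteMeasure μ] [IsFiniteMeasure ν]
    {A : Set E} (hA : MeasurableSet A) : |μ.real A - ν.real A| ≤ dTV μ ν / 2 := by
  have hbdd : BddAbove (Set.range fun A : {A : Set E // MeasurableSet A} =>
      |μ.real A.1 - ν.real A.1|) := by
    refine ⟨μ.real Set.univ + ν.real Set.univ, ?_⟩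
    rintro _ ⟨A, rfl⟩
    have hμA : μ.real A ≤ μ.real Set.univ := measureReal_mono (Set.subset_univ _)
    have hνA : ν.real A ≤ ν.real Set.univ := measureReal_mono (Set.subset_univ _)
    rw [abs_sub_le_iff]
    constructor <;> linarith [measureReal_nonneg (μ := μ) (s := A.1),
      measureReal_nonneg (μ := ν) (s := A.1)]
  have := le_ciSup hbdd ⟨A, hA⟩
  unfold dTV
  simp only [measureReal_def] at this ⊢
  linarith

lemma dTV_le_of_forall_abs_measureReal_sub_le {μ ν : Measure E} {c : ℝ}
    (h : ∀ A, MeasurableSet A → |μ.real A - ν.real A| ≤ c) : dTV μ ν ≤ 2 * c := by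
  have : Nonempty {A : Set E // MeasurableSet A} := ⟨⟨∅, .empty⟩⟩
  exact mul_le_mul_of_nonneg_left (ciSup_le fun A => h A.1 A.2) zero_le_two

lemma measureReal_univ_le_one_sub_half_dTV {μ ν η : Measure E} [IsProbabilityMeasure μ]
    [IsProbabilityMeasure ν] (hημ : η ≤ μ) (hην : η ≤ ν) :
    η.real Set.univ ≤ 1 - dTV μ ν / 2 := by
  have : IsFiniteMeasure η := isFiniteMeasure_of_le ν hην
  have split_le {ρ ρ' : Measure E} [IsFiniteMeasure ρ] [IsProbabilityMeasure ρ'] (hηρ : η ≤ ρ)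
      (hηρ' : η ≤ ρ') {A : Set E} (hA : MeasurableSet A) :
      η.real Set.univ ≤ ρ.real A + (1 - ρ'.real A) := by
    rw [← measureReal_add_measureReal_compl hA, ← probReal_compl_eq_one_sub hA]
    exact add_le_add (ENNReal.toReal_mono (measure_ne_top _ _) (hηρ A))
      (ENNReal.toReal_mono (measure_ne_top _ _) (hηρ' Aᶜ))
  suffices ∀ A, MeasurableSet A → |μ.real A - ν.real A| ≤ 1 - η.real Set.univ by
    linarith [dTV_le_of_forall_abs_measureReal_sub_le this]
  intro A hA
  rw [abs_sub_le_iff]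
  constructor <;> linarith [split_le hημ hην hA, split_le hην hημ hA]

end TotalVariation

section Bind

variable {E F : Type*} [MeasurableSpace E] [MeasurableSpace F]

lemma measureReal_bind_eq_integral (η : Measure E) [IsFiniteMeasure η] (κ : Kernel E F)
    [IsFiniteKernel κ] {A : Set F} (hA : MeasurableSet A) :
    (η.bind κ).real A = ∫ x, (κ x).real A ∂η := by
  rw [measureReal_def, Measure.bind_apply hA κ.aemeasurable, ← integral_toReal
    (κ.measurable_coe hA).aemeasurable (ae_of_all _ fun x => measure_lt_top _ _)]
  rfl

lemma integrable_measureReal (η : Measure E) [IsFiniteMeasure η] (κ : Kernel E F)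
    [IsFiniteKernel κ] {A : Set F} (hA : MeasurableSet A) :
    Integrable (fun x => (κ x).real A) η := by
  refine Integrable.of_bound (κ.measurable_coe hA).ennreal_toReal.aestronglyMeasurable
    κ.bound.toReal (ae_of_all _ fun x => ?_)
  rw [Real.norm_of_nonneg measureReal_nonneg]
  exact ENNReal.toReal_mono κ.bound_ne_top (κ.measure_le_bound x A)

lemma dTV_bind_le (η : Measure E) [IsFiniteMeasure η] (κ κ' : Kernel E F) [IsFiniteKernel κ]
    [IsFiniteKernel κ'] {c : ℝ} (h : ∀ x, dTV (κ x) (κ' x) ≤ c) :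
    dTV (η.bind κ) (η.bind κ') ≤ c * η.real Set.univ := by
  suffices ∀ A, MeasurableSet A →
      |(η.bind κ).real A - (η.bind κ').real A| ≤ c / 2 * η.real Set.univ by
    linarith [dTV_le_of_forall_abs_measureReal_sub_le this]
  intro A hA
  rw [measureReal_bind_eq_integral η κ hA, measureReal_bind_eq_integral η κ' hA,
    ← integral_sub (integrable_measureReal η κ hA) (integrable_measureReal η κ' hA)]
  refine norm_integral_le_of_norm_le_const (f := fun x => (κ x).real A - (κ' x).real A)
    (ae_of_all η fun x => ?_)
  rw [Real.norm_eq_abs]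
  linarith [abs_measureReal_sub_le_half_dTV (κ x) (κ' x) hA, h x]

end Bind

lemma withDensity_min_rnDeriv_one_le_left {E : Type*} [MeasurableSpace E] (μ ν : Measure E) :
    ν.withDensity (fun x => min (μ.rnDeriv ν x) 1) ≤ μ :=
  (withDensity_mono (ae_of_all _ fun _ => min_le_left _ _)).trans (μ.withDensity_rnDeriv_le ν)

lemma withDensity_min_rnDeriv_one_le_right {E : Type*} [MeasurableSpace E] (μ ν : Measure E) :
    ν.withDensity (fun x => min (μ.rnDeriv ν x) 1) ≤ ν :=
  (withDensity_mono (ae_of_all _ fun _ => min_le_right _ _)).trans_eq withDensity_one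

/-- With `η(dx) = (dμ/dν ∧ 1) ν(dx)`, under the measure-Lipschitz condition with constant
`lam ≥ 0` one has `d_TV(P_μ η, P_ν η) ≤ lam d_TV(μ,ν) (1 − d_TV(μ,ν)/2)`. -/
theorem stmt4 {E : Type*} [MeasurableSpace E]
    (P : Measure E → Kernel E E) (hMarkov : ∀ μ, IsMarkovKernel (P μ))
    (lam : ℝ) (hlam0 : 0 ≤ lam)
    (hLip : ∀ μ ν : Measure E, IsProbabilityMeasure μ → IsProbabilityMeasure ν →
      ∀ x : E, dTV ((P μ) x) ((P ν) x) ≤ lam * dTV μ ν)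
    (μ ν : Measure E) (hμ : IsProbabilityMeasure μ) (hν : IsProbabilityMeasure ν)
    (η : Measure E) (hη : η = ν.withDensity (fun x => min (μ.rnDeriv ν x) 1)) :
    dTV (η.bind ⇑(P μ)) (η.bind ⇑(P ν)) ≤ lam * dTV μ ν * (1 - dTV μ ν / 2) := by
  have hημ : η ≤ μ := hη ▸ withDensity_min_rnDeriv_one_le_left μ ν
  have hην : η ≤ ν := hη ▸ withDensity_min_rnDeriv_one_le_right μ ν
  have : IsFiniteMeasure η := isFiniteMeasure_of_le ν hην
  have := hMarkov μ
  have := hMarkov ν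
  calc dTV (η.bind (P μ)) (η.bind (P ν)) ≤ lam * dTV μ ν * η.real Set.univ :=
        dTV_bind_le η (P μ) (P ν) (hLip μ ν hμ hν)
    _ ≤ lam * dTV μ ν * (1 - dTV μ ν / 2) :=
        mul_le_mul_of_nonneg_left (measureReal_univ_le_one_sub_half_dTV hημ hην)
          (mul_nonneg hlam0 (dTV_nonneg μ ν))
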